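/- arXiv:0810.1146 — 4 statements merged into one kernel-verified Lean document; each statement's English description precedes it below -/
import Mathlib

section
/- For all real numbers x and y, |power_p(x,y)| ≤ p · min(|x|, |y|). -/
noncomputable def powerp (p : ℕ) (x y : ℝ) : ℝ :=
  if x + y = 0 then 0
  else ((Real.sign x + Real.sign y) / 2) * ((x + y) / 2) * (1 - |(x - y) / (x + y)| ^ p)

/-! Off the open quadrants `x * y > 0` one factor of `powerp` vanishes: the sign factor when the
signs are strictly opposite, and `1 - |(x - y) / (x + y)| ^ p = 1 - 1 ^ p` when one argument is `0`.
Since `powerp` is invariant under `(x, y) ↦ (-x, -y)`, it remains to treat `x, y > 0`. There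
`powerp p x y = (x + y) / 2 * (1 - r ^ p)` with `r = |x - y| / (x + y) ∈ [0, 1]` and
`(x + y) / 2 * (1 - r) = min x y`, so Bernoulli's inequality `1 - r ^ p ≤ p * (1 - r)` gives
the bound. -/

lemma one_sub_pow_le_mul_one_sub {r : ℝ} (hr : 0 ≤ r) (p : ℕ) :
    1 - r ^ p ≤ p * (1 - r) := by
  linarith [one_add_mul_sub_le_pow (by linarith : (-1 : ℝ) ≤ r) p]

lemma add_div_two_mul_one_sub_abs_sub_div {x y : ℝ} (hxy : 0 < x + y) :
    (x + y) / 2 * (1 - |x - y| / (x + y)) = min x y := by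
  field_simp
  linarith [min_add_max x y, max_sub_min_eq_abs' x y]

lemma powerp_neg_neg (p : ℕ) (x y : ℝ) : powerp p (-x) (-y) = powerp p x y := by
  have hsum : -x + -y = -(x + y) := by ring
  have hratio : (-x - -y) / (-x + -y) = (x - y) / (x + y) := by
    rw [hsum, show -x - -y = -(x - y) by ring, neg_div_neg_eq]
  unfold powerp
  rw [hratio]
  simp only [hsum, neg_eq_zero, Real.sign_neg]
  split_ifs <;> ring

lemma powerp_eq_zero_of_mul_nonpos (p : ℕ) {x y : ℝ} (h : x * y ≤ 0) : powerp p x y = 0 := by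
  unfold powerp
  split_ifs with hxy
  · rfl
  rcases eq_or_ne x 0 with rfl | hx
  · simp [neg_div, div_self (by simpa using hxy : y ≠ 0)]
  rcases eq_or_ne y 0 with rfl | hy
  · simp [div_self (by simpa using hxy : x ≠ 0)]
  have hsign : Real.sign x + Real.sign y = 0 := by
    rcases hx.lt_or_gt with hx | hx
    · have hy : 0 < y := (nonneg_of_mul_nonpos_right h hx).lt_of_ne' hy
      rw [Real.sign_of_neg hx, Real.sign_of_pos hy, neg_add_cancel]
    · have hy : y < 0 := (nonpos_of_mul_nonpos_right h hx).lt_of_ne hy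
      rw [Real.sign_of_pos hx, Real.sign_of_neg hy, add_neg_cancel]
  rw [hsign, zero_div, zero_mul, zero_mul]

lemma powerp_of_pos (p : ℕ) {x y : ℝ} (hx : 0 < x) (hy : 0 < y) :
    powerp p x y = (x + y) / 2 * (1 - (|x - y| / (x + y)) ^ p) := by
  unfold powerp
  rw [if_neg (by positivity), Real.sign_of_pos hx, Real.sign_of_pos hy, abs_div,
    abs_of_pos (by positivity : 0 < x + y)]
  ring

lemma abs_powerp_le_min_of_pos (p : ℕ) {x y : ℝ} (hx : 0 < x) (hy : 0 < y) :
    |powerp p x y| ≤ p * min x y := by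
  have hxy : 0 < x + y := by positivity
  set r := |x - y| / (x + y)
  have hr0 : 0 ≤ r := by positivity
  have hr1 : r ≤ 1 := (div_le_one hxy).mpr (abs_sub_lt_iff.mpr ⟨by linarith, by linarith⟩).le
  rw [powerp_of_pos p hx hy, ← add_div_two_mul_one_sub_abs_sub_div hxy,
    abs_of_nonneg (mul_nonneg (by positivity) (sub_nonneg.mpr (pow_le_one₀ hr0 hr1)))]
  calc (x + y) / 2 * (1 - r ^ p) ≤ (x + y) / 2 * (p * (1 - r)) := by
        gcongr; exact one_sub_pow_le_mul_one_sub hr0 p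
    _ = p * ((x + y) / 2 * (1 - r)) := by ring

theorem abs_powerp_le_min_general (p : ℕ) (x y : ℝ) :
    |powerp p x y| ≤ (p : ℝ) * min |x| |y| := by
  rcases le_or_gt (x * y) 0 with hxy | hxy
  · rw [powerp_eq_zero_of_mul_nonpos p hxy, abs_zero]
    positivity
  rcases mul_pos_iff.mp hxy with ⟨hx, hy⟩ | ⟨hx, hy⟩
  · simpa only [abs_of_pos hx, abs_of_pos hy] using abs_powerp_le_min_of_pos p hx hy
  · rw [← powerp_neg_neg, abs_of_neg hx, abs_of_neg hy]
    exact abs_powerp_le_min_of_pos p (neg_pos.mpr hx) (neg_pos.mpr hy)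

theorem abs_powerp_le_min (p : ℕ) (hp : 1 ≤ p) (x y : ℝ) :
    |powerp p x y| ≤ (p : ℝ) * min |x| |y| :=
  abs_powerp_le_min_general p x y
end

section
/- For the Power-p subdivision scheme S with p ≥ 5 applied to a bounded sequence f, at even indices one has |D(S(f))_{2n}| ≤ (3/4) · sup_k |Df_k|, where D(S(f))_{2n} = S(f)_{2n-1} - 2f_n + S(f)_{2n+1}. -/
/-- Second difference operator. -/
def D (f : ℤ → ℝ) (n : ℤ) : ℝ := f (n + 1) - 2 * f n + f (n - 1)

/-!
Expanding the scheme gives `D(S f)_{2n} = Df_n / 2 - (P₁ + P₂) / 8` with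
`P₁ = power_p(Df_{n-1}, Df_n)` and `P₂ = power_p(Df_n, Df_{n+1})`. Since `power_p(x, y)` never
exceeds `max |x| |y|` in absolute value, all three terms are bounded by `M = sup_k |Df_k|`, giving
`M / 2 + 2M / 8 = 3M / 4`.
-/

lemma Real.abs_sign_le_one (r : ℝ) : |Real.sign r| ≤ 1 := by
  rcases Real.sign_apply_eq r with h | h | h <;> simp [h]

lemma Real.sign_add_sign_eq_zero_of_mul_neg {x y : ℝ} (h : x * y < 0) :
    Real.sign x + Real.sign y = 0 := by
  rcases mul_neg_iff.mp h with ⟨hx, hy⟩ | ⟨hx, hy⟩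
  · simp [Real.sign_of_pos hx, Real.sign_of_neg hy]
  · simp [Real.sign_of_neg hx, Real.sign_of_pos hy]

lemma abs_sub_div_add_le_one_of_mul_nonneg {x y : ℝ} (h : 0 ≤ x * y) :
    |(x - y) / (x + y)| ≤ 1 := by
  have hsq : |x - y| ≤ |x + y| := sq_le_sq.mp (by nlinarith)
  rw [abs_div]
  exact div_le_one_of_le₀ hsq (abs_nonneg _)

lemma abs_one_sub_pow_le_one {t : ℝ} (h₀ : 0 ≤ t) (h₁ : t ≤ 1) (p : ℕ) : |1 - t ^ p| ≤ 1 := by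
  have := pow_nonneg h₀ p
  have := pow_le_one₀ h₀ h₁ (n := p)
  rw [abs_le]
  constructor <;> linarith

lemma abs_powerp_le (p : ℕ) (x y : ℝ) : |powerp p x y| ≤ max |x| |y| := by
  unfold powerp
  split_ifs
  · simp
  rcases lt_or_ge (x * y) 0 with hneg | hnonneg
  · simp [Real.sign_add_sign_eq_zero_of_mul_neg hneg]
  have hsign : |Real.sign x + Real.sign y| ≤ 2 :=
    (abs_add_le _ _).trans (by linarith [Real.abs_sign_le_one x, Real.abs_sign_le_one y])
  have hpow := abs_one_sub_pow_le_one (abs_nonneg _)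
    (abs_sub_div_add_le_one_of_mul_nonneg hnonneg) p
  calc |(Real.sign x + Real.sign y) / 2 * ((x + y) / 2) * (1 - |(x - y) / (x + y)| ^ p)|
      = |Real.sign x + Real.sign y| / 2 * (|x + y| / 2) * |1 - |(x - y) / (x + y)| ^ p| := by
        simp only [abs_mul, abs_div, abs_two]
    _ ≤ 2 / 2 * ((|x| + |y|) / 2) * 1 := by gcongr; exact abs_add_le x y
    _ ≤ max |x| |y| := by linarith [le_max_left |x| |y|, le_max_right |x| |y|]

lemma abs_D_le {f : ℤ → ℝ} {C : ℝ} (hC : ∀ n, |f n| ≤ C) (k : ℤ) : |D f k| ≤ 4 * C := by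
  have hsucc := abs_le.mp (hC (k + 1))
  have hself := abs_le.mp (hC k)
  have hpred := abs_le.mp (hC (k - 1))
  rw [D, abs_le]
  constructor <;> linarith

lemma scheme_second_difference_even_eq (φ : ℝ → ℝ → ℝ) (f Sodd : ℤ → ℝ)
    (hS : ∀ m, Sodd m = (f m + f (m + 1)) / 2 - (1 / 8) * φ (D f m) (D f (m + 1))) (n : ℤ) :
    Sodd (n - 1) - 2 * f n + Sodd n
      = D f n / 2 - (1 / 8) * (φ (D f (n - 1)) (D f n) + φ (D f n) (D f (n + 1))) := by
  rw [hS, hS, sub_add_cancel]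
  unfold D
  ring

lemma abs_half_sub_eighth_mul_add_le {a b c M : ℝ} (ha : |a| ≤ M) (hb : |b| ≤ M)
    (hc : |c| ≤ M) : |a / 2 - (1 / 8) * (b + c)| ≤ (3 / 4) * M := by
  rw [abs_le] at *
  constructor <;> linarith [ha.1, ha.2, hb.1, hb.2, hc.1, hc.2]

-- `Sodd n` stands for `S(f)_{2n+1}`.
theorem powerp_scheme_D_even_general (p : ℕ) (f : ℤ → ℝ)
    (hf : ∃ C, ∀ n, |f n| ≤ C) (Sodd : ℤ → ℝ)
    (hS : ∀ m, Sodd m = (f m + f (m + 1)) / 2 - (1 / 8) * powerp p (D f m) (D f (m + 1)))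
    (n : ℤ) :
    |Sodd (n - 1) - 2 * f n + Sodd n| ≤ (3 / 4) * ⨆ k, |D f k| := by
  obtain ⟨C, hC⟩ := hf
  have hbdd : BddAbove (Set.range fun k => |D f k|) := ⟨4 * C, by
    rintro _ ⟨k, rfl⟩
    exact abs_D_le hC k⟩
  have hle (k : ℤ) : |D f k| ≤ ⨆ k, |D f k| := le_ciSup hbdd k
  have hpowerp (k : ℤ) : |powerp p (D f k) (D f (k + 1))| ≤ ⨆ k, |D f k| :=
    (abs_powerp_le p _ _).trans (max_le (hle _) (hle _))
  rw [scheme_second_difference_even_eq (powerp p) f Sodd hS n]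
  refine abs_half_sub_eighth_mul_add_le (hle n) ?_ (hpowerp n)
  simpa using hpowerp (n - 1)

/-- For the Power-p scheme with `p ≥ 5`, at even indices
`|D(S f)_{2n}| = |S(f)_{2n-1} - 2 f_n + S(f)_{2n+1}| ≤ (3/4) ⨆ k, |Df_k|`,
where `Sodd n` denotes `S(f)_{2n+1}`. -/
theorem powerp_scheme_D_even (p : ℕ) (hp : 5 ≤ p) (f : ℤ → ℝ)
    (hf : ∃ C, ∀ n, |f n| ≤ C) (Sodd : ℤ → ℝ)
    (hS : ∀ m, Sodd m = (f m + f (m + 1)) / 2 - (1 / 8) * powerp p (D f m) (D f (m + 1)))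
    (n : ℤ) :
    |Sodd (n - 1) - 2 * f n + Sodd n| ≤ (3 / 4) * ⨆ k, |D f k| :=
  powerp_scheme_D_even_general p f hf Sodd hS n
end

section
/- Suppose S_NL = S + F∘δ is an interpolatory scheme where: S is linear with S(f)_{2n} = f_n, F satisfies ‖F(d)‖_∞ ≤ M‖d‖_∞ for some M > 0, and there exists c < 1 with ‖δ(S(f)) + δ(F(δf))‖_∞ ≤ c‖δf‖_∞ for all bounded f. Then for every bounded sequence f⁰ and the iterates fʲ = S_NL^j(f⁰), one has ‖S_NL(fʲ) − S(fʲ)‖_∞ ≤ M·cʲ·‖δf⁰‖_∞ for all j ≥ 0. -/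
open scoped BoundedContinuousFunction

/-- For `c < 0` the hypothesis forces `ν = 0`, so the bound holds for every sign of `c`. -/
theorem iterate_le_pow_mul_of_le_mul {α : Type*} {T : α → α} {ν : α → ℝ} {c : ℝ}
    (hν : ∀ x, 0 ≤ ν x) (hT : ∀ x, ν (T x) ≤ c * ν x) (k : ℕ) (x : α) :
    ν (T^[k] x) ≤ c ^ k * ν x := by
  rcases le_or_gt 0 c with hc | hc
  · induction k with
    | zero => simp
    | succ k ih =>
      rw [Function.iterate_succ_apply', pow_succ', mul_assoc]
      exact (hT _).trans (mul_le_mul_of_nonneg_left ih hc)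
  · have hzero : ∀ y, ν y = 0 := fun y =>
      le_antisymm (nonpos_of_mul_nonneg_right ((hν _).trans (hT y)) hc) (hν y)
    simp [hzero]

theorem perturbed_scheme_estimate_general
    (S δ : (ℤ →ᵇ ℝ) →L[ℝ] (ℤ →ᵇ ℝ)) (F : (ℤ →ᵇ ℝ) → (ℤ →ᵇ ℝ))
    (SNL : (ℤ →ᵇ ℝ) → (ℤ →ᵇ ℝ))
    (hSNL : ∀ f, SNL f = S f + F (δ f))
    (M : ℝ) (hM : 0 < M) (hF : ∀ dd : ℤ →ᵇ ℝ, ‖F dd‖ ≤ M * ‖dd‖)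
    (c : ℝ)
    (hcontr : ∀ f : ℤ →ᵇ ℝ, ‖δ (S f) + δ (F (δ f))‖ ≤ c * ‖δ f‖)
    (f0 : ℤ →ᵇ ℝ) (j : ℕ) :
    ‖SNL (SNL^[j] f0) - S (SNL^[j] f0)‖ ≤ M * c ^ j * ‖δ f0‖ := by
  have hstep : ∀ f, ‖δ (SNL f)‖ ≤ c * ‖δ f‖ := fun f => by
    simpa only [hSNL, map_add] using hcontr f
  have hdecay := iterate_le_pow_mul_of_le_mul (fun f => norm_nonneg (δ f)) hstep j f0
  calc ‖SNL (SNL^[j] f0) - S (SNL^[j] f0)‖ = ‖F (δ (SNL^[j] f0))‖ := by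
        rw [hSNL, add_sub_cancel_left]
    _ ≤ M * ‖δ (SNL^[j] f0)‖ := hF _
    _ ≤ M * (c ^ j * ‖δ f0‖) := mul_le_mul_of_nonneg_left hdecay hM.le
    _ = M * c ^ j * ‖δ f0‖ := (mul_assoc _ _ _).symm

/-- Convergence estimate for a nonlinear scheme `S_NL = S + F ∘ δ` that is a perturbation of a
linear interpolatory scheme `S`: for the iterates `fʲ = S_NL^[j] f⁰`,
`‖S_NL(fʲ) − S(fʲ)‖_∞ ≤ M · cʲ · ‖δ f⁰‖_∞`. Here `ℓ^∞` is modeled by `ℤ →ᵇ ℝ`. -/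
theorem perturbed_scheme_estimate
    (S δ : (ℤ →ᵇ ℝ) →L[ℝ] (ℤ →ᵇ ℝ)) (F : (ℤ →ᵇ ℝ) → (ℤ →ᵇ ℝ))
    (SNL : (ℤ →ᵇ ℝ) → (ℤ →ᵇ ℝ))
    (hSNL : ∀ f, SNL f = S f + F (δ f))
    (hinterp : ∀ (f : ℤ →ᵇ ℝ) (n : ℤ), SNL f (2 * n) = f n)
    (M : ℝ) (hM : 0 < M) (hF : ∀ dd : ℤ →ᵇ ℝ, ‖F dd‖ ≤ M * ‖dd‖)
    (c : ℝ) (hc : c < 1)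
    (hcontr : ∀ f : ℤ →ᵇ ℝ, ‖δ (S f) + δ (F (δ f))‖ ≤ c * ‖δ f‖)
    (f0 : ℤ →ᵇ ℝ) (j : ℕ) :
    ‖SNL (SNL^[j] f0) - S (SNL^[j] f0)‖ ≤ M * c ^ j * ‖δ f0‖ :=
  perturbed_scheme_estimate_general S δ F SNL hSNL M hM hF c hcontr f0 j
end

section
/- Suppose S_NL(f)_{2n+1} = S(f)_{2n+1} + F(δf)_{2n+1}, S_NL(f)_{2n} = f_n, where δ is a bounded linear operator on ℓ^∞, F is Lipschitz: ‖F(d₁)−F(d₂)‖_∞ ≤ M‖d₁−d₂‖_∞, and S_NL is contractive relative to δ: there is c < 1 with ‖δ(S_NL f − S_NL g)‖_∞ ≤ c‖δ(f−g)‖_∞ for all bounded f, g. Given details d^k (k = 0,…,j−1) and initial data f⁰, define f^{k+1} by f^{k+1}_{2n} = f^k_n and f^{k+1}_{2n+1} = S_NL(f^k)_{2n+1} + d^k_n, and similarly for f̃ with data f̃⁰, d̃^k. Then ∑_{k=1}^{j} ‖δ(f^{k−1}) − δ(f̃^{k−1})‖_∞ ≤ (1/(1−c)) (‖δ f⁰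 − δ f̃⁰‖_∞ + ∑_{l=0}^{j−2} ‖δ d^l − δ d̃^l‖_∞). -/
/-!
Writing `aₖ = ‖δ fᵏ - δ f̃ᵏ‖` and `bₖ = ‖δ dᵏ - δ d̃ᵏ‖`, linearity of `δ` and the contractivity
of `S_NL` relative to `δ` give the scalar recursion `aₖ₊₁ ≤ c aₖ + bₖ`. Summing it over
`k < m` yields `(1 - c) ∑_{k ≤ m} aₖ + c aₘ ≤ a₀ + ∑_{l < m} bₗ`, and the term `c aₘ` is
nonnegative (for `c < 0` contractivity forces `aₘ = 0`), which is the geometric-series bound.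
-/

open Finset
open scoped BoundedContinuousFunction

section ScalarRecursion

variable {a b : ℕ → ℝ} {c : ℝ}

theorem one_sub_mul_sum_range_succ_add_mul_le (hrec : ∀ k, a (k + 1) ≤ c * a k + b k) (m : ℕ) :
    (1 - c) * ∑ k ∈ range (m + 1), a k + c * a m ≤ a 0 + ∑ l ∈ range m, b l := by
  induction m with
  | zero => simp [sub_mul]
  | succ m ih =>
    rw [sum_range_succ a (m + 1), sum_range_succ b m]
    linarith [hrec m]

theorem sum_range_le_of_le_mul_add (hc : c < 1) (ha : ∀ k, 0 ≤ a k) (hca : ∀ k, 0 ≤ c * a k)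
    (hrec : ∀ k, a (k + 1) ≤ c * a k + b k) (j : ℕ) :
    ∑ k ∈ range j, a k ≤ 1 / (1 - c) * (a 0 + ∑ l ∈ range (j - 1), b l) := by
  have hpos : 0 < 1 - c := sub_pos.mpr hc
  rw [one_div_mul_eq_div, le_div_iff₀ hpos]
  cases j with
  | zero => simpa using ha 0
  | succ m =>
    have := one_sub_mul_sum_range_succ_add_mul_le hrec m
    rw [Nat.add_sub_cancel]
    linarith [hca m]

end ScalarRecursion

theorem norm_map_add_sub_map_add_le {E G 𝓕 : Type*} [AddCommGroup E] [SeminormedAddCommGroup G]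
    [FunLike 𝓕 E G] [AddMonoidHomClass 𝓕 E G] (δ : 𝓕) {T : E → E} {c : ℝ}
    (hcontr : ∀ u v, ‖δ (T u - T v)‖ ≤ c * ‖δ (u - v)‖) {u v x y : E} :
    ‖δ (T u + x) - δ (T v + y)‖ ≤ c * ‖δ u - δ v‖ + ‖δ x - δ y‖ := by
  have hsplit : δ (T u + x) - δ (T v + y) = δ (T u - T v) + (δ x - δ y) := by
    simp only [map_add, map_sub]
    abel
  calc ‖δ (T u + x) - δ (T v + y)‖ ≤ ‖δ (T u - T v)‖ + ‖δ x - δ y‖ := hsplit ▸ norm_add_le _ _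
    _ ≤ c * ‖δ u - δ v‖ + ‖δ x - δ y‖ := by
        rw [← map_sub δ u v]
        gcongr
        exact hcontr u v

theorem stability_sum_estimate_general
    (δ : (ℤ →ᵇ ℝ) →L[ℝ] (ℤ →ᵇ ℝ))
    (SNL : (ℤ →ᵇ ℝ) → (ℤ →ᵇ ℝ))
    (c : ℝ) (hc : c < 1)
    (hcontr : ∀ u v : ℤ →ᵇ ℝ, ‖δ (SNL u - SNL v)‖ ≤ c * ‖δ (u - v)‖)
    (f g d e : ℕ → (ℤ →ᵇ ℝ))
    (hfrec : ∀ k, f (k + 1) = SNL (f k) + d k)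
    (hgrec : ∀ k, g (k + 1) = SNL (g k) + e k)
    (j : ℕ) :
    ∑ k ∈ Finset.range j, ‖δ (f k) - δ (g k)‖ ≤
      (1 / (1 - c)) * (‖δ (f 0) - δ (g 0)‖ + ∑ l ∈ Finset.range (j - 1), ‖δ (d l) - δ (e l)‖) := by
  refine sum_range_le_of_le_mul_add hc (fun k ↦ norm_nonneg _) (fun k ↦ ?_) (fun k ↦ ?_) j
  · rw [← map_sub]
    exact (norm_nonneg _).trans (hcontr (f k) (g k))
  · rw [hfrec, hgrec]
    exact norm_map_add_sub_map_add_le δ hcontr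

/-- Stability estimate: under Lipschitz continuity of `F` and contractivity of `δ ∘ S_NL`,
the sums of differences of `δ`-values of two multiresolution reconstructions are controlled by
the initial data and the details.  Here `ℓ^∞` is modeled by `ℤ →ᵇ ℝ`, and `f^{k+1} = S_NL(f^k) + d^k`
with the detail sequence `d^k` injected at odd positions (so `f^{k+1}_{2n} = f^k_n` and
`f^{k+1}_{2n+1} = S_NL(f^k)_{2n+1} + d^k_n`). -/
theorem stability_sum_estimate
    (S δ : (ℤ →ᵇ ℝ) →L[ℝ] (ℤ →ᵇ ℝ)) (F : (ℤ →ᵇ ℝ) → (ℤ →ᵇ ℝ))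
    (SNL : (ℤ →ᵇ ℝ) → (ℤ →ᵇ ℝ))
    (hSNLodd : ∀ (u : ℤ →ᵇ ℝ) (n : ℤ), SNL u (2 * n + 1) = S u (2 * n + 1) + F (δ u) (2 * n + 1))
    (hSNLeven : ∀ (u : ℤ →ᵇ ℝ) (n : ℤ), SNL u (2 * n) = u n)
    (M : ℝ) (hF : ∀ d₁ d₂ : ℤ →ᵇ ℝ, ‖F d₁ - F d₂‖ ≤ M * ‖d₁ - d₂‖)
    (c : ℝ) (hc : c < 1)
    (hcontr : ∀ u v : ℤ →ᵇ ℝ, ‖δ (SNL u - SNL v)‖ ≤ c * ‖δ (u - v)‖)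
    (f g d e : ℕ → (ℤ →ᵇ ℝ))
    (hfrec : ∀ k, f (k + 1) = SNL (f k) + d k)
    (hgrec : ∀ k, g (k + 1) = SNL (g k) + e k)
    (j : ℕ) :
    ∑ k ∈ Finset.range j, ‖δ (f k) - δ (g k)‖ ≤
      (1 / (1 - c)) * (‖δ (f 0) - δ (g 0)‖ + ∑ l ∈ Finset.range (j - 1), ‖δ (d l) - δ (e l)‖) :=
  stability_sum_estimate_general δ SNL c hc hcontr f g d e hfrec hgrec j
end
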